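/- Let G be a bipartite (n,k,d)-graph with n ≥ 2. Then for every edge e of G, the graph G−e obtained by deleting the edge e is an (n−2, k, d)-graph. -/

import Mathlib

/-!
Let `S` be a set of `n - 2` vertices, `M` a `k`-matching of `G - uv - S`, and `F` the vertices
of `G - S` left uncovered by `M`. For distinct `x, y ∈ F` the set `S ∪ {x, y}` has `n` vertices,
so `M` extends to a matching `N_xy` of `G - S - x - y` covering `|V| - n - d` vertices; we need
two more. If `ab` is an edge with `a, b ∈ F`, then `N_ab + ab` covers enough vertices, and it
avoids `uv` as soon as `u` or `v` is covered or outside `G - S`, or `ab` is an edge `vx` with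
`x ≠ u`. In the remaining case `u, v ∈ F` and `u` is the only neighbour of `v` in `F`; take an
edge `ab` of `N_uv` inside `F`, so that `N_ua` and `N_ub` both miss `v`. As `G` is bipartite,
the alternating path of `N_ua Δ N_ub` starting at `a` either augments `N_ua` or ends at a vertex
of the colour of `a`, hence not at `b`; switching along it (and adding `ab` in the second case)
gives the required matching, which misses `u`.
-/

open SimpleGraph

/-- `M` is a `k`-matching in its ambient graph `H`: a matching consisting of exactly `k`
edges, i.e. covering exactly `2 * k` vertices. -/
def IsKMatching {W : Type*} {H : SimpleGraph W} (M : H.Subgraph) (k : ℕ) : Prop :=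
  M.IsMatching ∧ M.verts.ncard = 2 * k

/-- `M` is a defect-`d` matching in its ambient graph `H` on the vertex type `W`:
a matching covering exactly `|W| - d` vertices. -/
def IsDefectMatching {W : Type*} {H : SimpleGraph W} (M : H.Subgraph) (d : ℕ) : Prop :=
  M.IsMatching ∧ M.verts.ncard = Nat.card W - d

/-- `G` is an `(n,k,d)`-graph: `|V(G)| ≥ n + 2k + d + 2`, `|V(G)| - n - d` is even, and for
every set `S` of `n` vertices the graph `G - S` contains a `k`-matching, and every
`k`-matching of `G - S` extends to a defect-`d` matching of `G - S`. -/
def IsNkdGraph {V : Type*} [Fintype V] (G : SimpleGraph V) (n k d : ℕ) : Prop :=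
  n + 2 * k + d + 2 ≤ Nat.card V ∧
  Even (Nat.card V - n - d) ∧
  ∀ S : Finset V, S.card = n →
    (∃ M : (G.induce ((S : Set V)ᶜ)).Subgraph, IsKMatching M k) ∧
    ∀ M : (G.induce ((S : Set V)ᶜ)).Subgraph, IsKMatching M k →
      ∃ M' : (G.induce ((S : Set V)ᶜ)).Subgraph, M ≤ M' ∧ IsDefectMatching M' d

/-- The number of odd components of `H`, i.e. connected components with an odd number
of vertices. -/
noncomputable def oddComponentsCard {W : Type*} (H : SimpleGraph W) : ℕ :=
  Nat.card {c : H.ConnectedComponent // Odd (Nat.card c.supp)}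

/-- The subgraph of `H` induced on the set `s` is factor-critical: deleting any one vertex of
`s` leaves a graph with a perfect matching. -/
def IsFactorCriticalOn {W : Type*} (H : SimpleGraph W) (s : Set W) : Prop :=
  ∀ w ∈ s, ∃ M : (H.induce (s \ {w})).Subgraph, M.IsPerfectMatching

/-- The graph `G + x` obtained from `G` by adding one new vertex (`none`) joined to every
vertex of `G`. -/
def addUniversalVertex {V : Type*} (G : SimpleGraph V) : SimpleGraph (Option V) :=
  SimpleGraph.fromRel (fun a b =>
    (∃ u v, a = some u ∧ b = some v ∧ G.Adj u v) ∨ a = none)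

namespace SimpleGraph

namespace Subgraph

section map

variable {V W : Type*} {G : SimpleGraph V} {G' : SimpleGraph W} {f : G' →g G}

lemma isMatching_map_iff (hf : Function.Injective f) {M : G'.Subgraph} :
    (M.map f).IsMatching ↔ M.IsMatching := by
  refine ⟨fun h v hv => ?_, IsMatching.map f hf⟩
  obtain ⟨_, ⟨x, y, hxy, hx, rfl⟩, hu⟩ := h ⟨v, hv, rfl⟩
  cases hf hx
  exact ⟨y, hxy, fun z hz => hf (hu _ ⟨v, z, hz, rfl, rfl⟩)⟩

lemma map_le_map_iff (hf : Function.Injective f) {M M' : G'.Subgraph} :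
    M.map f ≤ M'.map f ↔ M ≤ M' := by
  refine ⟨fun h => ⟨fun v hv => ?_, fun v w hvw => ?_⟩, map_mono⟩
  · obtain ⟨v', hv', he⟩ := h.1 ⟨v, hv, rfl⟩
    exact hf he ▸ hv'
  · obtain ⟨v', w', h', hv, hw⟩ := h.2 ⟨v, w, hvw, rfl, rfl⟩
    cases hf hv
    cases hf hw
    exact h'

lemma mem_range_map_iff (hf : Function.Injective f) {N : G.Subgraph} :
    N ∈ Set.range (Subgraph.map f) ↔
      N.verts ⊆ Set.range f ∧ ∀ x y, N.Adj (f x) (f y) → G'.Adj x y := by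
  constructor
  · rintro ⟨M, rfl⟩
    refine ⟨Set.image_subset_range _ _, fun x y ⟨x', y', h, hx, hy⟩ => ?_⟩
    cases hf hx
    cases hf hy
    exact M.adj_sub h
  · rintro ⟨hv, hadj⟩
    refine ⟨N.comap f, Subgraph.ext (by simpa using Set.image_preimage_eq_of_subset hv)
      (funext₂ fun p q => propext ⟨?_, ?_⟩)⟩
    · rintro ⟨x, y, h, rfl, rfl⟩
      exact h.2
    · intro h
      obtain ⟨x, rfl⟩ := hv (N.edge_vert h)
      obtain ⟨y, rfl⟩ := hv (N.edge_vert h.symm)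
      exact ⟨x, y, ⟨hadj x y h, h⟩, rfl, rfl⟩

end map

end Subgraph

variable {V : Type*} {G H : SimpleGraph V}

lemma injective_ofLE_comp_induce (h : H ≤ G) (T : Set V) :
    Function.Injective ((Hom.ofLE h).comp (Embedding.induce T).toHom) :=
  Subtype.val_injective

lemma mem_range_map_ofLE_comp_induce_iff (h : H ≤ G) (T : Set V) {N : G.Subgraph} :
    N ∈ Set.range (Subgraph.map ((Hom.ofLE h).comp (Embedding.induce T).toHom)) ↔
      N.verts ⊆ T ∧ N.spanningCoe ≤ H := by
  rw [Subgraph.mem_range_map_iff (injective_ofLE_comp_induce h T),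
    show Set.range ((Hom.ofLE h).comp (Embedding.induce T).toHom) = T from Subtype.range_coe]
  exact and_congr_right fun hT =>
    ⟨fun hadj x y hxy => hadj ⟨x, hT (N.edge_vert hxy)⟩ ⟨y, hT (N.edge_vert hxy.symm)⟩ hxy,
      fun hle x y hxy => hle hxy⟩

theorem isNkdGraph_iff_of_le [Fintype V] (h : H ≤ G) {n k d : ℕ} :
    IsNkdGraph H n k d ↔ n + 2 * k + d + 2 ≤ Nat.card V ∧ Even (Nat.card V - n - d) ∧
      ∀ S : Finset V, S.card = n →
        (∃ M : G.Subgraph, M.verts ⊆ (↑S)ᶜ ∧ M.spanningCoe ≤ H ∧ M.IsMatching ∧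
          M.verts.ncard = 2 * k) ∧
        ∀ M : G.Subgraph, M.verts ⊆ (↑S)ᶜ → M.spanningCoe ≤ H → M.IsMatching →
          M.verts.ncard = 2 * k →
          ∃ N : G.Subgraph, M ≤ N ∧ N.verts ⊆ (↑S)ᶜ ∧ N.spanningCoe ≤ H ∧ N.IsMatching ∧
            N.verts.ncard = Nat.card V - n - d := by
  refine and_congr_right fun _ => and_congr_right fun _ => forall₂_congr fun S hS => ?_
  set T : Set V := (↑S)ᶜ
  set f := (Hom.ofLE h).comp (Embedding.induce T).toHom
  have hf : Function.Injective f := injective_ofLE_comp_induce h T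
  have hT : Nat.card T = Nat.card V - n := by
    rw [Nat.card_coe_set_eq, Set.ncard_compl, Set.ncard_coe_finset, hS]
  have hmap (M : (H.induce T).Subgraph) (m : ℕ) :
      M.IsMatching ∧ M.verts.ncard = m ↔ (M.map f).IsMatching ∧ (M.map f).verts.ncard = m := by
    rw [Subgraph.isMatching_map_iff hf, Subgraph.map_verts, Set.ncard_image_of_injective _ hf]
  have hex (p : G.Subgraph → Prop) : (∃ M : (H.induce T).Subgraph, p (M.map f)) ↔
      ∃ N : G.Subgraph, (N.verts ⊆ T ∧ N.spanningCoe ≤ H) ∧ p N := by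
    simp only [← mem_range_map_ofLE_comp_induce_iff h]
    exact Set.exists_range_iff.symm
  have hall (p : G.Subgraph → Prop) : (∀ M : (H.induce T).Subgraph, p (M.map f)) ↔
      ∀ N : G.Subgraph, (N.verts ⊆ T ∧ N.spanningCoe ≤ H) → p N := by
    simp only [← mem_range_map_ofLE_comp_induce_iff h]
    exact Set.forall_mem_range.symm
  simp only [IsKMatching, IsDefectMatching, hmap, hT, ← Subgraph.map_le_map_iff hf]
  refine and_congr ((hex fun N => N.IsMatching ∧ N.verts.ncard = 2 * k).trans ?_)
    ((hall fun N => N.IsMatching ∧ N.verts.ncard = 2 * k → ∃ M' : (H.induce T).Subgraph,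
      N ≤ M'.map f ∧ (M'.map f).IsMatching ∧ (M'.map f).verts.ncard = Nat.card V - n - d).trans ?_)
  · simp only [and_assoc]
  · simp only [and_imp]
    refine forall_congr' fun N => forall₄_congr fun _ _ _ _ =>
      (hex fun N' => N ≤ N' ∧ N'.IsMatching ∧ N'.verts.ncard = Nat.card V - n - d).trans ?_
    exact exists_congr fun _ => by tauto

lemma Coloring.eq_of_adj_of_adj (col : G.Coloring (Fin 2)) {x y z : V} (hxy : G.Adj x y)
    (hyz : G.Adj y z) : col x = col z := by
  have h1 := col.valid hxy
  have h2 := col.valid hyz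
  omega

namespace Subgraph

variable {M N : G.Subgraph} {x y z : V}

lemma IsMatching.adj_of_le (hM : M.IsMatching) (hN : N.IsMatching) (hle : M ≤ N)
    (hx : x ∈ M.verts) (hxy : N.Adj x y) : M.Adj x y := by
  obtain ⟨w, hw, -⟩ := hM hx
  exact hN.eq_of_adj_left (hle.2 hw) hxy ▸ hw

lemma IsMatching.notMem_of_le (hM : M.IsMatching) (hN : N.IsMatching) (hle : M ≤ N)
    (hx : x ∉ M.verts) (hxy : N.Adj x y) : y ∉ M.verts :=
  fun hy => hx (hM.adj_of_le hN hle hy hxy.symm).snd_mem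

lemma exists_adj_notMem_of_ncard_lt [Finite V] (hM : M.IsMatching) (hN : N.IsMatching)
    (hle : M ≤ N) (hlt : M.verts.ncard < N.verts.ncard) :
    ∃ x y, N.Adj x y ∧ x ∉ M.verts ∧ y ∉ M.verts := by
  obtain ⟨x, hxN, hxM⟩ := Set.not_subset.1 fun h => hlt.not_ge (Set.ncard_le_ncard h)
  obtain ⟨y, hxy, -⟩ := hN hxN
  exact ⟨x, y, hxy, hxM, hM.notMem_of_le hN hle hxM hxy⟩

lemma IsMatching.deleteVerts_pair (hN : N.IsMatching) (hyz : N.Adj y z) :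
    (N.deleteVerts {y, z}).IsMatching := by
  rintro w ⟨hwN, hwyz⟩
  obtain ⟨w', hww', hu⟩ := hN hwN
  have hw' : w' ∉ ({y, z} : Set V) := by
    rintro (rfl | rfl)
    · exact hwyz (.inr (hN.eq_of_adj_left hww'.symm hyz))
    · exact hwyz (.inl (hN.eq_of_adj_left hww'.symm hyz.symm))
  exact ⟨w', deleteVerts_adj.2 ⟨hwN, hwyz, hww'.snd_mem, hw', hww'⟩,
    fun t ht => hu t (deleteVerts_adj.1 ht).2.2.2.2⟩

lemma IsMatching.sup_subgraphOfAdj (hN : N.IsMatching) (hxy : G.Adj x y) (hx : x ∉ N.verts)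
    (hy : y ∉ N.verts) : (N ⊔ G.subgraphOfAdj hxy).IsMatching := by
  refine hN.sup (.subgraphOfAdj hxy) ?_
  rw [hN.support_eq_verts, (IsMatching.subgraphOfAdj hxy).support_eq_verts,
    subgraphOfAdj_verts, Set.disjoint_insert_right, Set.disjoint_singleton_right]
  exact ⟨hx, hy⟩

lemma ncard_verts_sup_subgraphOfAdj [Finite V] (hxy : G.Adj x y) (hx : x ∉ N.verts)
    (hy : y ∉ N.verts) : (N ⊔ G.subgraphOfAdj hxy).verts.ncard = N.verts.ncard + 2 := by
  rw [verts_sup, subgraphOfAdj_verts, Set.ncard_union_eq (by simp [hx, hy]),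
    Set.ncard_pair hxy.ne]

def exchange (N : G.Subgraph) (y z : V) {x : V} (hxy : G.Adj x y) : G.Subgraph :=
  N.deleteVerts {y, z} ⊔ G.subgraphOfAdj hxy

variable {hxy : G.Adj x y}

lemma verts_exchange : (N.exchange y z hxy).verts = N.verts \ {y, z} ∪ {x, y} := rfl

lemma exchange_le : N.exchange y z hxy ≤ N ⊔ G.subgraphOfAdj hxy :=
  sup_le_sup_right deleteVerts_le _

lemma le_exchange (hle : M ≤ N) (hy : y ∉ M.verts) (hz : z ∉ M.verts) :
    M ≤ N.exchange y z hxy := by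
  have hM : ∀ w ∈ M.verts, w ∉ ({y, z} : Set V) := by
    rintro w hw (rfl | rfl)
    exacts [hy hw, hz hw]
  refine le_trans ?_ le_sup_left
  exact ⟨fun w hw => ⟨hle.1 hw, hM w hw⟩, fun v w hvw => deleteVerts_adj.2
    ⟨hle.1 hvw.fst_mem, hM v hvw.fst_mem, hle.1 hvw.snd_mem, hM w hvw.snd_mem, hle.2 hvw⟩⟩

lemma IsMatching.exchange (hN : N.IsMatching) (hyz : N.Adj y z) (hx : x ∉ N.verts) :
    (N.exchange y z hxy).IsMatching :=
  (hN.deleteVerts_pair hyz).sup_subgraphOfAdj hxy (fun h => hx (Set.mem_of_mem_sdiff h))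
    fun h => Set.notMem_of_mem_sdiff h (.inl rfl)

lemma ncard_verts_exchange [Finite V] (hyz : N.Adj y z) (hx : x ∉ N.verts) :
    (N.exchange y z hxy).verts.ncard = N.verts.ncard := by
  have hsub : ({y, z} : Set V) ⊆ N.verts := by
    rintro w (rfl | rfl)
    exacts [hyz.fst_mem, hyz.snd_mem]
  have h2 := Set.ncard_le_ncard hsub
  rw [Set.ncard_pair hyz.ne] at h2
  rw [exchange, ncard_verts_sup_subgraphOfAdj hxy (fun h => hx (Set.mem_of_mem_sdiff h))
    fun h => Set.notMem_of_mem_sdiff h (.inl rfl),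
    deleteVerts_verts, Set.ncard_sdiff hsub, Set.ncard_pair hyz.ne]
  omega

lemma ncard_edgeSet_exchange_sdiff_lt [Finite V] {N' : G.Subgraph} (hyz : N.Adj y z)
    (hxy' : N'.Adj x y) (hyz' : ¬ N'.Adj y z) :
    ((N.exchange y z hxy).edgeSet \ N'.edgeSet).ncard < (N.edgeSet \ N'.edgeSet).ncard := by
  have hsub : (N.exchange y z hxy).edgeSet \ N'.edgeSet ⊆ (N.edgeSet \ N'.edgeSet) \ {s(y, z)} := by
    rintro e ⟨he, heN'⟩
    rw [exchange, edgeSet_sup, edgeSet_subgraphOfAdj] at he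
    rcases he with he | rfl
    · induction e with
      | h v w =>
        obtain ⟨-, hv, -, hw, hvw⟩ := deleteVerts_adj.1 he
        refine ⟨⟨hvw, heN'⟩, fun h => ?_⟩
        rcases Sym2.eq_iff.1 h with ⟨rfl, -⟩ | ⟨-, rfl⟩
        · exact hv (.inl rfl)
        · exact hw (.inl rfl)
    · exact absurd hxy' heN'
  exact (Set.ncard_le_ncard hsub).trans_lt (Set.ncard_sdiff_singleton_lt_of_mem ⟨hyz, hyz'⟩)

lemma eq_of_adj_of_le_sup {P Na Nb : G.Subgraph} {a a' w : V} (hNb : Nb.IsMatching)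
    (hle : P ≤ Na ⊔ Nb) (ha : a ∉ Na.verts) (haa' : Nb.Adj a a') (haw : P.Adj a w) : w = a' := by
  rcases hle.2 haw with h | h
  exacts [absurd h.fst_mem ha, hNb.eq_of_adj_left h haa']

variable [Finite V]

/-- Follow the alternating path of `Na Δ Nb` starting at `a`: either it augments `Na`, or it ends
after an `Na`-edge at a vertex of the colour of `a`, hence not at `b`, and switching `Nb` along it
uncovers `a` while `b` stays uncovered. -/
theorem exists_le_sup_ncard_add_two_or_avoid (col : G.Coloring (Fin 2)) {M₀ Na Nb : G.Subgraph}
    (hM₀ : M₀.IsMatching) (hNa : Na.IsMatching) (hNb : Nb.IsMatching) (h0a : M₀ ≤ Na)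
    (h0b : M₀ ≤ Nb) (hcard : Na.verts.ncard = Nb.verts.ncard) {a b : V} (ha : a ∉ Na.verts)
    (hb : b ∉ Nb.verts) (hab : col a ≠ col b) :
    ∃ P : G.Subgraph, M₀ ≤ P ∧ P ≤ Na ⊔ Nb ∧ P.IsMatching ∧
      (P.verts.ncard = Nb.verts.ncard + 2 ∨
        P.verts.ncard = Nb.verts.ncard ∧ a ∉ P.verts ∧ b ∉ P.verts) := by
  induction hm : (Na.edgeSet \ Nb.edgeSet).ncard using Nat.strong_induction_on
    generalizing Na a with
  | _ m ih =>
  by_cases haNb : a ∈ Nb.verts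
  swap
  · exact ⟨Nb, h0b, le_sup_right, hNb, .inr ⟨rfl, haNb, hb⟩⟩
  obtain ⟨a', haa', -⟩ := hNb haNb
  have hGaa' := Nb.adj_sub haa'
  by_cases ha'Na : a' ∈ Na.verts
  swap
  · exact ⟨Na ⊔ G.subgraphOfAdj hGaa', h0a.trans le_sup_left,
      sup_le_sup_left (subgraphOfAdj_le_of_adj _ haa') _, hNa.sup_subgraphOfAdj hGaa' ha ha'Na,
      .inl (by rw [ncard_verts_sup_subgraphOfAdj hGaa' ha ha'Na, hcard])⟩
  -- Swap the `Na`-edge `a'a''` for the `Nb`-edge `aa'` and continue from `a''`.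
  obtain ⟨a'', ha'a'', -⟩ := hNa ha'Na
  have haM₀ : a ∉ M₀.verts := fun h => ha (h0a.1 h)
  have ha'M₀ : a' ∉ M₀.verts := hM₀.notMem_of_le hNb h0b haM₀ haa'
  have ha''M₀ : a'' ∉ M₀.verts := hM₀.notMem_of_le hNa h0a ha'M₀ ha'a''
  have ha''a : a'' ≠ a := fun h => ha (h ▸ ha'a''.snd_mem)
  have hcol : col a'' = col a := col.eq_of_adj_of_adj (Na.adj_sub ha'a'').symm hGaa'.symm
  set Na' := Na.exchange a' a'' hGaa'
  have hNa'le : Na' ≤ Na ⊔ Nb :=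
    exchange_le.trans (sup_le_sup_left (subgraphOfAdj_le_of_adj _ haa') _)
  have ha''Na' : a'' ∉ Na'.verts := by
    simp [Na', verts_exchange, ha''a, ha'a''.ne.symm]
  have hlt : (Na'.edgeSet \ Nb.edgeSet).ncard < m := hm ▸
    ncard_edgeSet_exchange_sdiff_lt ha'a'' haa' fun h => ha''a (hNb.eq_of_adj_left h haa'.symm)
  obtain ⟨P', h0P', hP'le, hP', hP'c⟩ := ih _ hlt (hNa.exchange ha'a'' ha)
    (le_exchange h0a ha'M₀ ha''M₀) (by rw [ncard_verts_exchange ha'a'' ha, hcard]) ha''Na'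
    (hcol ▸ hab) rfl
  replace hP'le := hP'le.trans (sup_le hNa'le le_sup_right)
  rcases hP'c with hP'c | ⟨hP'c, ha''P', hbP'⟩
  · exact ⟨P', h0P', hP'le, hP', .inl hP'c⟩
  by_cases haP' : a ∈ P'.verts
  swap
  · exact ⟨P', h0P', hP'le, hP', .inr ⟨hP'c, haP', hbP'⟩⟩
  -- Undo the swap inside `P'`.
  obtain ⟨w, haw, -⟩ := hP' haP'
  have hP'a'a : P'.Adj a' a := (eq_of_adj_of_le_sup hNb hP'le ha haa' haw ▸ haw).symm
  have hba' : b ≠ a' := fun h => hb (h ▸ haa'.snd_mem)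
  have hba'' : b ≠ a'' := fun h => hab (hcol ▸ h ▸ rfl)
  refine ⟨P'.exchange a' a (Na.adj_sub ha'a'').symm, le_exchange h0P' ha'M₀ haM₀,
    exchange_le.trans (sup_le hP'le ((subgraphOfAdj_le_of_adj _ ha'a''.symm).trans le_sup_left)),
    hP'.exchange hP'a'a ha''P', .inr ⟨by rw [ncard_verts_exchange hP'a'a ha''P', hP'c], ?_, ?_⟩⟩
  · simp [verts_exchange, ha''a.symm, haa'.ne]
  · simp [verts_exchange, hbP', hba', hba'']

theorem exists_le_sup_ncard_add_two_of_adj (col : G.Coloring (Fin 2)) {M₀ Na Nb : G.Subgraph}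
    (hM₀ : M₀.IsMatching) (hNa : Na.IsMatching) (hNb : Nb.IsMatching) (h0a : M₀ ≤ Na)
    (h0b : M₀ ≤ Nb) (hcard : Na.verts.ncard = Nb.verts.ncard) {a b : V} (ha : a ∉ Na.verts)
    (hb : b ∉ Nb.verts) (hab : G.Adj a b) :
    ∃ P : G.Subgraph, M₀ ≤ P ∧ P ≤ Na ⊔ Nb ⊔ G.subgraphOfAdj hab ∧ P.IsMatching ∧
      P.verts.ncard = Nb.verts.ncard + 2 := by
  obtain ⟨P, h0, hle, hP, hc | ⟨hc, haP, hbP⟩⟩ :=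
    exists_le_sup_ncard_add_two_or_avoid col hM₀ hNa hNb h0a h0b hcard ha hb (col.valid hab)
  · exact ⟨P, h0, hle.trans le_sup_left, hP, hc⟩
  · exact ⟨P ⊔ G.subgraphOfAdj hab, h0.trans le_sup_left, sup_le_sup_right hle _,
      hP.sup_subgraphOfAdj hab haP hbP, by rw [ncard_verts_sup_subgraphOfAdj hab haP hbP, hc]⟩

def ExtendsAvoidingPairs (M₀ : G.Subgraph) (A : Set V) (m : ℕ) : Prop :=
  ∀ x ∈ A \ M₀.verts, ∀ y ∈ A \ M₀.verts, x ≠ y →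
    ∃ N : G.Subgraph, M₀ ≤ N ∧ N.IsMatching ∧ N.verts ⊆ A \ {x, y} ∧ N.verts.ncard = m

namespace ExtendsAvoidingPairs

variable {M₀ : G.Subgraph} {A : Set V} {m : ℕ} {a b u v : V}

lemma exists_adj (h : M₀.ExtendsAvoidingPairs A m) (hM₀ : M₀.IsMatching)
    (hm : M₀.verts.ncard < m) (hx : x ∈ A \ M₀.verts) (hy : y ∈ A \ M₀.verts) (hxy : x ≠ y) :
    ∃ a b, G.Adj a b ∧ a ∈ (A \ M₀.verts) \ {x, y} ∧ b ∈ (A \ M₀.verts) \ {x, y} := by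
  obtain ⟨N, hle, hN, hNA, hNm⟩ := h x hx y hy hxy
  obtain ⟨a, b, hab, ha, hb⟩ := exists_adj_notMem_of_ncard_lt hM₀ hN hle (hNm ▸ hm)
  obtain ⟨haA, haxy⟩ := hNA hab.fst_mem
  obtain ⟨hbA, hbxy⟩ := hNA hab.snd_mem
  exact ⟨a, b, N.adj_sub hab, ⟨⟨haA, ha⟩, haxy⟩, ⟨⟨hbA, hb⟩, hbxy⟩⟩

lemma exists_adj_of_adj (h : M₀.ExtendsAvoidingPairs A m) (ha : a ∈ A \ M₀.verts)
    (hb : b ∈ A \ M₀.verts) (hab : G.Adj a b) :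
    ∃ P : G.Subgraph, M₀ ≤ P ∧ P.IsMatching ∧ P.verts ⊆ A ∧ P.verts.ncard = m + 2 ∧ P.Adj a b := by
  obtain ⟨N, hle, hN, hNA, hNm⟩ := h a ha b hb hab.ne
  have haN : a ∉ N.verts := fun h => (hNA h).2 (.inl rfl)
  have hbN : b ∉ N.verts := fun h => (hNA h).2 (.inr rfl)
  refine ⟨N ⊔ G.subgraphOfAdj hab, hle.trans le_sup_left, hN.sup_subgraphOfAdj hab haN hbN,
    Set.union_subset (hNA.trans Set.sdiff_subset) ?_,
    by rw [ncard_verts_sup_subgraphOfAdj hab haN hbN, hNm], .inr (subgraphOfAdj_adj_self hab)⟩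
  rintro w (rfl | rfl)
  exacts [ha.1, hb.1]

lemma exists_notMem (h : M₀.ExtendsAvoidingPairs A m) (col : G.Coloring (Fin 2))
    (hM₀ : M₀.IsMatching) (hm : M₀.verts.ncard < m) (hu : u ∈ A \ M₀.verts)
    (hv : v ∈ A \ M₀.verts) (huv : u ≠ v) (hv' : ∀ x ∈ A \ M₀.verts, G.Adj v x → x = u) :
    ∃ P : G.Subgraph, M₀ ≤ P ∧ P.IsMatching ∧ P.verts ⊆ A ∧ P.verts.ncard = m + 2 ∧
      u ∉ P.verts := by
  obtain ⟨a, b, hab, ha, hb⟩ := h.exists_adj hM₀ hm hu hv huv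
  have hN (c) (hc : c ∈ (A \ M₀.verts) \ {u, v}) : ∃ N : G.Subgraph, M₀ ≤ N ∧ N.IsMatching ∧
      N.verts ⊆ A \ {u, c} ∧ N.verts.ncard = m ∧ v ∉ N.verts := by
    obtain ⟨N, hle, hN, hNA, hNm⟩ := h u hu c hc.1 fun h => hc.2 (.inl h.symm)
    refine ⟨N, hle, hN, hNA, hNm, fun hvN => ?_⟩
    obtain ⟨w, hvw, -⟩ := hN hvN
    obtain ⟨hwA, hwuc⟩ := hNA hvw.snd_mem
    exact hwuc (.inl (hv' w ⟨hwA, hM₀.notMem_of_le hN hle hv.2 hvw⟩ (N.adj_sub hvw)))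
  obtain ⟨Na, h0a, hNa, hNaA, hNam, -⟩ := hN a ha
  obtain ⟨Nb, h0b, hNb, hNbA, hNbm, -⟩ := hN b hb
  obtain ⟨P, h0, hle, hP, hPm⟩ := exists_le_sup_ncard_add_two_of_adj col hM₀ hNa hNb h0a h0b
    (hNam.trans hNbm.symm) (fun h => (hNaA h).2 (.inr rfl)) (fun h => (hNbA h).2 (.inr rfl)) hab
  refine ⟨P, h0, hP, fun w hw => ?_, hNbm ▸ hPm, fun huP => ?_⟩
  · rcases hle.1 hw with (hw | hw) | rfl | rfl
    exacts [(hNaA hw).1, (hNbA hw).1, ha.1.1, hb.1.1]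
  · rcases hle.1 huP with (hu | hu) | hu | hu
    · exact (hNaA hu).2 (.inl rfl)
    · exact (hNbA hu).2 (.inl rfl)
    · exact ha.2 (.inl hu.symm)
    · exact hb.2 (.inl hu.symm)

theorem exists_not_adj (h : M₀.ExtendsAvoidingPairs A m) (col : G.Coloring (Fin 2))
    (hM₀ : M₀.IsMatching) (hm : M₀.verts.ncard < m) (hA : 1 < (A \ M₀.verts).ncard)
    (huv : u ≠ v) (hM₀uv : ¬M₀.Adj u v) :
    ∃ P : G.Subgraph, M₀ ≤ P ∧ P.IsMatching ∧ P.verts ⊆ A ∧ P.verts.ncard = m + 2 ∧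
      ¬P.Adj u v := by
  by_cases hF : u ∈ A \ M₀.verts ∧ v ∈ A \ M₀.verts
  · obtain ⟨hu, hv⟩ := hF
    by_cases hv' : ∀ x ∈ A \ M₀.verts, G.Adj v x → x = u
    · obtain ⟨P, h0, hP, hPA, hPm, huP⟩ := h.exists_notMem col hM₀ hm hu hv huv hv'
      exact ⟨P, h0, hP, hPA, hPm, fun hPuv => huP hPuv.fst_mem⟩
    · push Not at hv'
      obtain ⟨x, hx, hvx, hxu⟩ := hv'
      obtain ⟨P, h0, hP, hPA, hPm, hPvx⟩ := h.exists_adj_of_adj hv hx hvx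
      exact ⟨P, h0, hP, hPA, hPm, fun hPuv => hxu (hP.eq_of_adj_left hPvx hPuv.symm)⟩
  -- Otherwise no extension of `M₀` inside `A` can use the edge `uv`.
  obtain ⟨x, y, hx, hy, hxy⟩ := (Set.one_lt_ncard_iff (Set.toFinite _)).1 hA
  obtain ⟨a, b, hab, ha, hb⟩ := h.exists_adj hM₀ hm hx hy hxy
  obtain ⟨P, h0, hP, hPA, hPm, -⟩ := h.exists_adj_of_adj ha.1 hb.1 hab
  refine ⟨P, h0, hP, hPA, hPm, fun hPuv => hF ⟨⟨hPA hPuv.fst_mem, fun hu => ?_⟩,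
    ⟨hPA hPuv.snd_mem, fun hv => ?_⟩⟩⟩
  · exact hM₀uv (hM₀.adj_of_le hP h0 hu hPuv)
  · exact hM₀uv (hM₀.adj_of_le hP h0 hv hPuv.symm).symm

end ExtendsAvoidingPairs

end Subgraph

lemma spanningCoe_le_deleteEdges_iff {N : G.Subgraph} {u v : V} :
    N.spanningCoe ≤ G.deleteEdges {s(u, v)} ↔ ¬N.Adj u v := by
  refine ⟨fun h huv => (deleteEdges_adj.1 (h huv)).2 rfl,
    fun h x y hxy => deleteEdges_adj.2 ⟨N.adj_sub hxy, fun he => ?_⟩⟩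
  rcases Sym2.eq_iff.1 he with ⟨rfl, rfl⟩ | ⟨rfl, rfl⟩
  exacts [h hxy, h hxy.symm]

end SimpleGraph

section

variable {V : Type*} [Fintype V] {G : SimpleGraph V} {n k d : ℕ}

lemma IsNkdGraph.exists_isMatching_of_card_le (hG : IsNkdGraph G n k d) {T : Finset V}
    (hT : T.card ≤ n) :
    ∃ M : G.Subgraph, M.verts ⊆ (↑T)ᶜ ∧ M.IsMatching ∧ M.verts.ncard = 2 * k := by
  rw [isNkdGraph_iff_of_le le_rfl] at hG
  obtain ⟨S, hTS, hS⟩ := Finset.exists_superset_card_eq hT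
    (by rw [← Nat.card_eq_fintype_card]; omega)
  obtain ⟨M, hMS, -, hM, hMk⟩ := (hG.2.2 S hS).1
  exact ⟨M, hMS.trans (Set.compl_subset_compl.2 (Finset.coe_subset.2 hTS)), hM, hMk⟩

lemma IsNkdGraph.extendsAvoidingPairs (hG : IsNkdGraph G n k d) (hn : 2 ≤ n) {S : Finset V}
    (hS : S.card = n - 2) {M : G.Subgraph} (hMS : M.verts ⊆ (↑S)ᶜ) (hM : M.IsMatching)
    (hMk : M.verts.ncard = 2 * k) :
    M.ExtendsAvoidingPairs (↑S)ᶜ (Nat.card V - n - d) := by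
  classical
  rw [isNkdGraph_iff_of_le le_rfl] at hG
  intro x ⟨hxS, hxM⟩ y ⟨hyS, hyM⟩ hxy
  have hS' : ((insert x (insert y S) : Finset V) : Set V)ᶜ = (↑S)ᶜ \ {x, y} := by
    ext
    simp only [Finset.coe_insert, Set.mem_compl_iff, Set.mem_sdiff, Set.mem_insert_iff,
      Set.mem_singleton_iff]
    tauto
  have hMS' : M.verts ⊆ ((insert x (insert y S) : Finset V) : Set V)ᶜ := by
    rw [hS']
    rintro w hw
    exact ⟨hMS hw, by rintro (rfl | rfl) <;> contradiction⟩
  obtain ⟨N, hle, hNS, -, hN, hNm⟩ := (hG.2.2 _ (by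
    rw [Finset.card_insert_of_notMem (by simpa [hxy] using hxS),
      Finset.card_insert_of_notMem (by simpa using hyS), hS]
    omega)).2 M hMS' M.spanningCoe_le hM hMk
  exact ⟨N, hle, hN, hS' ▸ hNS, hNm⟩

end

theorem stmt_11 {V : Type*} [Fintype V] (G : SimpleGraph V) (n k d : ℕ)
    (hbip : G.Colorable 2) (hG : IsNkdGraph G n k d) (hn : 2 ≤ n)
    (u v : V) (huv : G.Adj u v) :
    IsNkdGraph (G.deleteEdges {s(u, v)}) (n - 2) k d := by
  classical
  obtain ⟨col⟩ := hbip
  have hcard := hG.1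
  rw [isNkdGraph_iff_of_le (G.deleteEdges_le _)]
  refine ⟨by omega, ?_, fun S hS => ⟨?_, fun M hMS hMuv hM hMk => ?_⟩⟩
  · obtain ⟨t, ht⟩ := hG.2.1
    exact ⟨t + 1, by omega⟩
  · obtain ⟨M, hMS, hM, hMk⟩ := hG.exists_isMatching_of_card_le (T := insert u S)
      ((Finset.card_insert_le u S).trans (by omega))
    refine ⟨M, fun w hw => ?_, spanningCoe_le_deleteEdges_iff.2 fun h => ?_, hM, hMk⟩
    · exact fun hwS => hMS hw (Finset.mem_insert_of_mem hwS)
    · exact hMS h.fst_mem (Finset.mem_insert_self u S)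
  have hfree : ((↑S)ᶜ \ M.verts).ncard = Nat.card V - (n - 2) - 2 * k := by
    rw [Set.ncard_sdiff hMS, Set.ncard_compl, Set.ncard_coe_finset, hS, hMk]
  obtain ⟨P, h0, hP, hPS, hPm, hPuv⟩ := (hG.extendsAvoidingPairs hn hS hMS hM hMk).exists_not_adj
    col hM (by omega) (by omega) huv.ne (spanningCoe_le_deleteEdges_iff.1 hMuv)
  exact ⟨P, h0, hPS, spanningCoe_le_deleteEdges_iff.2 hPuv, hP, by omega⟩
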